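/- arXiv:1412.0301 — 3 statements merged into one kernel-verified Lean document; each statement's English description precedes it below -/
import Mathlib

section
/- Let A be a finite weighted point set in ℝ^d with weights w_i ≥ 0 (not all zero), let C be a finite nonempty set of existing centers with D(x) = dist(x, C), and suppose a new center x is chosen from A with probability proportional to w_i·D(x_i)². Then the expected new cost E[Σ_{j∈A} w_j · min(D(x_j), ‖x - x_j‖)²] ≤ 8 · Σ_{j∈A} w_j ‖x_j - c_A‖², where c_A is the weighted center of mass of A. -/
/-!
Write `M i` for the cost after adding `x i` as a center, `S` for the current cost and `N i`
for the cost of `A` with `x i` as its only center, so that `M i ≤ min S (N i)`. Since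
`D² ≤ 2 D(x j)² + 2 ‖x i - x j‖²`, averaging over `j` with the weights gives
`W D(x i)² ≤ 2 S + 2 N i`, hence `W D(x i)² M i ≤ 4 S N i`. Summing with the weights `w i`
and using `∑ w i N i = 2 W ∑ w j ‖x j - c‖² - 2 ‖∑ w j (x j - c)‖²`, valid for every `c`,
yields the factor `8` after dividing by `W S`.
-/

open Finset

section Variance

variable {ι E : Type*} [NormedAddCommGroup E] [InnerProductSpace ℝ E] (A : Finset ι) (w : ι → ℝ)

theorem sum_sum_mul_mul_norm_sub_sq (a : ι → E) :
    ∑ i ∈ A, ∑ j ∈ A, w i * w j * ‖a i - a j‖ ^ 2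
      = 2 * (∑ i ∈ A, w i) * ∑ j ∈ A, w j * ‖a j‖ ^ 2 - 2 * ‖∑ i ∈ A, w i • a i‖ ^ 2 := by
  have hcross : ‖∑ i ∈ A, w i • a i‖ ^ 2
      = ∑ i ∈ A, ∑ j ∈ A, w i * w j * inner ℝ (a i) (a j) := by
    rw [← real_inner_self_eq_norm_sq, sum_inner]
    simp only [inner_sum, real_inner_smul_left, real_inner_smul_right]
    exact sum_congr rfl fun i _ => sum_congr rfl fun j _ => by ring
  calc ∑ i ∈ A, ∑ j ∈ A, w i * w j * ‖a i - a j‖ ^ 2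
      = ∑ i ∈ A, ∑ j ∈ A, (w i * ‖a i‖ ^ 2 * w j + w i * (w j * ‖a j‖ ^ 2)
          - 2 * (w i * w j * inner ℝ (a i) (a j))) :=
        sum_congr rfl fun i _ => sum_congr rfl fun j _ => by rw [norm_sub_sq_real]; ring
    _ = (∑ i ∈ A, w i * ‖a i‖ ^ 2) * (∑ j ∈ A, w j) + (∑ i ∈ A, w i) * ∑ j ∈ A, w j * ‖a j‖ ^ 2
          - 2 * ∑ i ∈ A, ∑ j ∈ A, w i * w j * inner ℝ (a i) (a j) := by
        simp only [sum_sub_distrib, sum_add_distrib, ← mul_sum, ← sum_mul]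
    _ = _ := by rw [hcross]; ring

theorem sum_sum_mul_mul_norm_sub_sq_le (x : ι → E) (c : E) :
    ∑ i ∈ A, ∑ j ∈ A, w i * w j * ‖x i - x j‖ ^ 2
      ≤ 2 * (∑ i ∈ A, w i) * ∑ j ∈ A, w j * ‖x j - c‖ ^ 2 := by
  have h := sum_sum_mul_mul_norm_sub_sq A w (x · - c)
  simp only [sub_sub_sub_cancel_right] at h
  rw [h]
  exact sub_le_self _ (by positivity)

end Variance

theorem inf'_norm_sub_le_add {E : Type*} [SeminormedAddCommGroup E] (C : Finset E)
    (hC : C.Nonempty) (a b : E) :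
    C.inf' hC (‖a - ·‖) ≤ C.inf' hC (‖b - ·‖) + ‖a - b‖ := by
  rw [← sub_le_iff_le_add]
  refine le_inf' hC _ fun p hp => ?_
  have := inf'_le (‖a - ·‖) hp
  have := norm_sub_le_norm_sub_add_norm_sub a b p
  linarith

theorem mul_mul_le_four_mul_of_le_two_mul_add {W d S N M : ℝ} (h : W * d ≤ 2 * S + 2 * N)
    (hM0 : 0 ≤ M) (hMS : M ≤ S) (hMN : M ≤ N) : W * d * M ≤ 4 * S * N :=
  calc W * d * M ≤ (2 * S + 2 * N) * M := mul_le_mul_of_nonneg_right h hM0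
    _ = 2 * S * M + 2 * N * M := by ring
    _ ≤ 2 * S * N + 2 * N * S := by
        linarith [mul_le_mul_of_nonneg_left hMN (hM0.trans hMS),
          mul_le_mul_of_nonneg_left hMS (hM0.trans hMN)]
    _ = 4 * S * N := by ring

section Sampling

variable {ι E : Type*} {A : Finset ι} {w : ι → ℝ} {D : E → ℝ}

theorem sq_le_two_mul_sq_add_two_mul_norm_sub_sq [SeminormedAddCommGroup E]
    (hD0 : ∀ a, 0 ≤ D a) (hD : ∀ a b, D a ≤ D b + ‖a - b‖) (a b : E) :
    D a ^ 2 ≤ 2 * D b ^ 2 + 2 * ‖a - b‖ ^ 2 :=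
  calc D a ^ 2 ≤ (D b + ‖a - b‖) ^ 2 := pow_le_pow_left₀ (hD0 a) (hD a b) 2
    _ ≤ 2 * D b ^ 2 + 2 * ‖a - b‖ ^ 2 := by linarith [add_sq_le (a := D b) (b := ‖a - b‖)]

theorem sum_mul_sq_le_two_mul_add [SeminormedAddCommGroup E]
    (hD0 : ∀ a, 0 ≤ D a) (hD : ∀ a b, D a ≤ D b + ‖a - b‖) (hw : ∀ i ∈ A, 0 ≤ w i)
    (x : ι → E) (i : ι) :
    (∑ j ∈ A, w j) * D (x i) ^ 2
      ≤ 2 * ∑ j ∈ A, w j * D (x j) ^ 2 + 2 * ∑ j ∈ A, w j * ‖x i - x j‖ ^ 2 := by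
  rw [sum_mul, mul_sum, mul_sum, ← sum_add_distrib]
  refine sum_le_sum fun j hj => ?_
  have := mul_le_mul_of_nonneg_left
    (sq_le_two_mul_sq_add_two_mul_norm_sub_sq hD0 hD (x i) (x j)) (hw j hj)
  linarith

theorem sum_mul_sq_mul_sum_min_sq_le [NormedAddCommGroup E] [InnerProductSpace ℝ E]
    (hD0 : ∀ a, 0 ≤ D a) (hD : ∀ a b, D a ≤ D b + ‖a - b‖) (hw : ∀ i ∈ A, 0 ≤ w i)
    (hW : 0 < ∑ i ∈ A, w i) (x : ι → E) (c : E) :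
    ∑ i ∈ A, w i * D (x i) ^ 2 * ∑ j ∈ A, w j * min (D (x j)) ‖x i - x j‖ ^ 2
      ≤ 8 * (∑ j ∈ A, w j * D (x j) ^ 2) * ∑ j ∈ A, w j * ‖x j - c‖ ^ 2 := by
  set W := ∑ i ∈ A, w i
  set S := ∑ j ∈ A, w j * D (x j) ^ 2
  set N : ι → ℝ := fun i => ∑ j ∈ A, w j * ‖x i - x j‖ ^ 2
  set M : ι → ℝ := fun i => ∑ j ∈ A, w j * min (D (x j)) ‖x i - x j‖ ^ 2
  have hmin0 : ∀ i j, 0 ≤ min (D (x j)) ‖x i - x j‖ := fun i j => le_min (hD0 _) (norm_nonneg _)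
  have hM0 : ∀ i, 0 ≤ M i := fun i =>
    sum_nonneg fun j hj => mul_nonneg (hw j hj) (sq_nonneg _)
  have hMS : ∀ i, M i ≤ S := fun i => sum_le_sum fun j hj =>
    mul_le_mul_of_nonneg_left (pow_le_pow_left₀ (hmin0 i j) (min_le_left _ _) 2) (hw j hj)
  have hMN : ∀ i, M i ≤ N i := fun i => sum_le_sum fun j hj =>
    mul_le_mul_of_nonneg_left (pow_le_pow_left₀ (hmin0 i j) (min_le_right _ _) 2) (hw j hj)
  have hS0 : 0 ≤ S := sum_nonneg fun j hj => mul_nonneg (hw j hj) (sq_nonneg _)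
  have hpoint : ∀ i ∈ A, W * (w i * D (x i) ^ 2 * M i) ≤ 4 * S * (w i * N i) := fun i hi =>
    calc W * (w i * D (x i) ^ 2 * M i) = w i * (W * D (x i) ^ 2 * M i) := by ring
      _ ≤ w i * (4 * S * N i) := mul_le_mul_of_nonneg_left
          (mul_mul_le_four_mul_of_le_two_mul_add (sum_mul_sq_le_two_mul_add hD0 hD hw x i)
            (hM0 i) (hMS i) (hMN i)) (hw i hi)
      _ = 4 * S * (w i * N i) := by ring
  refine le_of_mul_le_mul_left ?_ hW
  calc W * ∑ i ∈ A, w i * D (x i) ^ 2 * M i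
      ≤ ∑ i ∈ A, 4 * S * (w i * N i) := by rw [mul_sum]; exact sum_le_sum hpoint
    _ = 4 * S * ∑ i ∈ A, ∑ j ∈ A, w i * w j * ‖x i - x j‖ ^ 2 := by
        simp only [N, ← mul_sum, mul_assoc]
    _ ≤ 4 * S * (2 * W * ∑ j ∈ A, w j * ‖x j - c‖ ^ 2) := by
        gcongr; exact sum_sum_mul_mul_norm_sub_sq_le A w x c
    _ = W * (8 * S * ∑ j ∈ A, w j * ‖x j - c‖ ^ 2) := by ring

end Sampling

theorem weighted_D2_sampling_eight_approx_general {d : ℕ} {ι : Type*}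
    (A : Finset ι) (x : ι → EuclideanSpace ℝ (Fin d)) (w : ι → ℝ)
    (hw : ∀ i ∈ A, 0 ≤ w i)
    (C : Finset (EuclideanSpace ℝ (Fin d))) (hC : C.Nonempty)
    (D : EuclideanSpace ℝ (Fin d) → ℝ)
    (hD : ∀ q, D q = C.inf' hC (fun p => ‖q - p‖))
    (S : ℝ) (hS : S = ∑ i ∈ A, w i * D (x i) ^ 2)
    (W : ℝ) (hW : W = ∑ i ∈ A, w i) (hWpos : 0 < W)
    (cA : EuclideanSpace ℝ (Fin d)) :
    ∑ i ∈ A, (w i * D (x i) ^ 2 / S) *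
        (∑ j ∈ A, w j * min (D (x j)) ‖x i - x j‖ ^ 2)
      ≤ 8 * ∑ j ∈ A, w j * ‖x j - cA‖ ^ 2 := by
  have hD0 : ∀ q, 0 ≤ D q := fun q => hD q ▸ le_inf' hC _ fun p _ => norm_nonneg _
  have hDlip : ∀ a b, D a ≤ D b + ‖a - b‖ := fun a b => by
    simpa only [hD] using inf'_norm_sub_le_add C hC a b
  subst hS hW
  have hbound := sum_mul_sq_mul_sum_min_sq_le hD0 hDlip hw hWpos x cA
  simp only [div_mul_eq_mul_div, ← sum_div]
  -- `div_le_of_le_mul₀` also covers `S = 0`, where the left side is `0` because `x / 0 = 0`.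
  refine div_le_of_le_mul₀ (sum_nonneg fun i hi => mul_nonneg (hw i hi) (sq_nonneg _))
    (mul_nonneg (by norm_num) (sum_nonneg fun j hj => mul_nonneg (hw j hj) (sq_nonneg _))) ?_
  linarith

theorem weighted_D2_sampling_eight_approx {d : ℕ} {ι : Type*}
    (A : Finset ι) (x : ι → EuclideanSpace ℝ (Fin d)) (w : ι → ℝ)
    (hw : ∀ i ∈ A, 0 ≤ w i)
    (C : Finset (EuclideanSpace ℝ (Fin d))) (hC : C.Nonempty)
    (D : EuclideanSpace ℝ (Fin d) → ℝ)
    (hD : ∀ q, D q = C.inf' hC (fun p => ‖q - p‖))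
    (S : ℝ) (hS : S = ∑ i ∈ A, w i * D (x i) ^ 2) (hSpos : 0 < S)
    (W : ℝ) (hW : W = ∑ i ∈ A, w i) (hWpos : 0 < W)
    (cA : EuclideanSpace ℝ (Fin d)) (hcA : cA = W⁻¹ • ∑ i ∈ A, w i • x i) :
    ∑ i ∈ A, (w i * D (x i) ^ 2 / S) *
        (∑ j ∈ A, w j * min (D (x j)) ‖x i - x j‖ ^ 2)
      ≤ 8 * ∑ j ∈ A, w j * ‖x j - cA‖ ^ 2 :=
  weighted_D2_sampling_eight_approx_general A x w hw C hC D hD S hS W hW hWpos cA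
end

section
/- Under the setting of the coverage discretization (Q partitioned into cells of a grid of mesh ε, density φ ≥ 0 with ∫_Q φ = 1, cell weights w_i and centroids x_i, J_i the cell second moments, D an upper bound on distances between adjacent Voronoi centers), for any set P of k sensor locations: H(P) ≤ Φ(P) + Σ_i J_i ≤ H(P) + 2√2 · D · ε. -/
/-!
By the parallel axis theorem, `∫_{C i} φ ‖q - c‖² = J i + w i ‖x i - c‖²` for every point `c`;
taking for `c` the center nearest to `x i` gives `H ≤ Φ + ∑ J` cell by cell. Conversely, fix on
each cell one center `p a₀` whose Voronoi cell meets it. For `q` in the cell with nearest center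
`p a`, `‖x i - p a‖² + ‖q - x i‖² = ‖q - p a‖² - 2⟪q - x i, x i - p a₀⟫ + 2⟪q - x i, p a - p a₀⟫`.
The middle term integrates to zero because `x i` is the centroid, and the last is at most
`2 √2 ε D` by Cauchy–Schwarz; summing over the cells uses `∑ w i = 1`.
-/

open MeasureTheory Finset
open scoped InnerProductSpace

section Bounded

variable {E : Type*} [NormedAddCommGroup E] [MeasurableSpace E] [OpensMeasurableSpace E]
  {μ : Measure E} {s : Set E} {φ : E → ℝ} {x : E}

lemma MeasureTheory.IntegrableOn.mul_norm_sub_sq_of_norm_le (hφ : IntegrableOn φ s μ)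
    (hs : MeasurableSet s) {r : ℝ} (hr : ∀ q ∈ s, ‖q - x‖ ≤ r) :
    IntegrableOn (fun q => φ q * ‖q - x‖ ^ 2) s μ := by
  have hcont : Continuous fun q => ‖q - x‖ ^ 2 := by fun_prop
  refine hφ.mul_bdd (c := r ^ 2) hcont.aestronglyMeasurable ?_
  filter_upwards [ae_restrict_mem hs] with q hq
  rw [norm_pow, norm_norm]
  exact pow_le_pow_left₀ (norm_nonneg _) (hr q hq) 2

end Bounded

section Moments

variable {E : Type*} [NormedAddCommGroup E] [InnerProductSpace ℝ E]

lemma norm_sub_sq_eq_add_inner (q x c : E) :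
    ‖q - c‖ ^ 2 = ‖q - x‖ ^ 2 + 2 * ⟪q - x, x - c⟫_ℝ + ‖x - c‖ ^ 2 := by
  rw [← norm_add_sq_real, sub_add_sub_cancel]

variable [MeasurableSpace E] {μ : Measure E} {s : Set E} {φ : E → ℝ} {x : E}

lemma MeasureTheory.IntegrableOn.mul_inner_sub (hφ : IntegrableOn φ s μ)
    (hφq : IntegrableOn (fun q => φ q • q) s μ) (x v : E) :
    IntegrableOn (fun q => φ q * ⟪q - x, v⟫_ℝ) s μ :=
  ((hφq.sub (hφ.smul_const x)).inner_const v).congr <| ae_of_all _ fun q => by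
    simp only [Pi.sub_apply, ← smul_sub, real_inner_smul_left]

lemma MeasureTheory.IntegrableOn.mul_norm_sub_sq (hφ : IntegrableOn φ s μ)
    (hφq : IntegrableOn (fun q => φ q • q) s μ)
    (hJ : IntegrableOn (fun q => φ q * ‖q - x‖ ^ 2) s μ) (c : E) :
    IntegrableOn (fun q => φ q * ‖q - c‖ ^ 2) s μ := by
  have h q : φ q * ‖q - c‖ ^ 2
      = φ q * ‖q - x‖ ^ 2 + 2 * (φ q * ⟪q - x, x - c⟫_ℝ) + φ q * ‖x - c‖ ^ 2 := by
    rw [norm_sub_sq_eq_add_inner q x c]; ring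
  simp only [h]
  exact (hJ.add ((hφ.mul_inner_sub hφq x (x - c)).const_mul 2)).add (hφ.mul_const _)

variable [CompleteSpace E]

lemma setIntegral_mul_inner_sub_eq_zero (hφ : IntegrableOn φ s μ)
    (hφq : IntegrableOn (fun q => φ q • q) s μ)
    (hx : (∫ q in s, φ q ∂μ) • x = ∫ q in s, φ q • q ∂μ) (v : E) :
    ∫ q in s, φ q * ⟪q - x, v⟫_ℝ ∂μ = 0 := by
  have h q : φ q * ⟪q - x, v⟫_ℝ = ⟪v, φ q • q - φ q • x⟫_ℝ := by
    rw [← smul_sub, inner_smul_right, real_inner_comm]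
  simp only [h]
  rw [integral_inner (f := fun q => φ q • q - φ q • x) (hφq.sub (hφ.smul_const x)),
    integral_sub hφq (hφ.smul_const x), integral_smul_const, hx, sub_self, inner_zero_right]

lemma setIntegral_mul_norm_sub_sq_eq (hφ : IntegrableOn φ s μ)
    (hφq : IntegrableOn (fun q => φ q • q) s μ)
    (hx : (∫ q in s, φ q ∂μ) • x = ∫ q in s, φ q • q ∂μ)
    (hJ : IntegrableOn (fun q => φ q * ‖q - x‖ ^ 2) s μ) (c : E) :
    ∫ q in s, φ q * ‖q - c‖ ^ 2 ∂μ
      = ∫ q in s, φ q * ‖q - x‖ ^ 2 ∂μ + (∫ q in s, φ q ∂μ) * ‖x - c‖ ^ 2 := by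
  have hmom := (hφ.mul_inner_sub hφq x (x - c)).const_mul 2
  have h q : φ q * ‖q - c‖ ^ 2
      = φ q * ‖q - x‖ ^ 2 + 2 * (φ q * ⟪q - x, x - c⟫_ℝ) + φ q * ‖x - c‖ ^ 2 := by
    rw [norm_sub_sq_eq_add_inner q x c]; ring
  have hJmom : IntegrableOn (fun q => φ q * ‖q - x‖ ^ 2 + 2 * (φ q * ⟪q - x, x - c⟫_ℝ)) s μ :=
    hJ.add hmom
  simp only [h]
  rw [integral_add hJmom (hφ.mul_const _), integral_add hJ hmom, integral_const_mul,
    setIntegral_mul_inner_sub_eq_zero hφ hφq hx, integral_mul_const]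
  ring

end Moments

section Voronoi

variable {ι E : Type*} [Fintype ι] [Nonempty ι] [NormedAddCommGroup E]

noncomputable def sqDistToNearest (p : ι → E) (q : E) : ℝ :=
  Finset.univ.inf' Finset.univ_nonempty fun j => ‖q - p j‖ ^ 2

def voronoiCell (p : ι → E) (a : ι) : Set E :=
  {q | ∀ l, ‖q - p a‖ ≤ ‖q - p l‖}

lemma sqDistToNearest_le (p : ι → E) (q : E) (j : ι) : sqDistToNearest p q ≤ ‖q - p j‖ ^ 2 :=
  inf'_le _ (mem_univ j)

lemma exists_mem_voronoiCell_sqDistToNearest_eq (p : ι → E) (q : E) :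
    ∃ a, q ∈ voronoiCell p a ∧ sqDistToNearest p q = ‖q - p a‖ ^ 2 := by
  obtain ⟨a, -, ha⟩ := exists_mem_eq_inf' univ_nonempty fun j => ‖q - p j‖ ^ 2
  refine ⟨a, fun l => ?_, ha⟩
  have hle : ‖q - p a‖ ^ 2 ≤ ‖q - p l‖ ^ 2 := ha ▸ sqDistToNearest_le p q l
  exact (pow_le_pow_iff_left₀ (norm_nonneg _) (norm_nonneg _) two_ne_zero).mp hle

variable [InnerProductSpace ℝ E]

lemma sqDistToNearest_add_norm_sub_sq_le {p : ι → E} {q x : E} {a₀ : ι} {r D : ℝ}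
    (hr : ‖q - x‖ ≤ r) (hD : ∀ a, q ∈ voronoiCell p a → ‖p a - p a₀‖ ≤ D) :
    sqDistToNearest p x + ‖q - x‖ ^ 2
      ≤ sqDistToNearest p q - 2 * ⟪q - x, x - p a₀⟫_ℝ + 2 * r * D := by
  obtain ⟨a, hqa, hGq⟩ := exists_mem_voronoiCell_sqDistToNearest_eq p q
  have hinner : ⟪q - x, p a - p a₀⟫_ℝ ≤ r * D :=
    (real_inner_le_norm _ _).trans
      (mul_le_mul hr (hD a hqa) (norm_nonneg _) ((norm_nonneg _).trans hr))
  have hsplit : ⟪q - x, x - p a⟫_ℝ = ⟪q - x, x - p a₀⟫_ℝ - ⟪q - x, p a - p a₀⟫_ℝ := by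
    rw [← inner_sub_right]; congr 1; abel
  linarith [sqDistToNearest_le p x a, norm_sub_sq_eq_add_inner q x (p a)]

variable [MeasurableSpace E] {μ : Measure E} {s : Set E} {φ : E → ℝ} {x : E} [CompleteSpace E]

lemma setIntegral_mul_sqDistToNearest_le (p : ι → E) (hs : MeasurableSet s)
    (hφ₀ : ∀ q ∈ s, 0 ≤ φ q) (hφ : IntegrableOn φ s μ)
    (hφq : IntegrableOn (fun q => φ q • q) s μ)
    (hx : (∫ q in s, φ q ∂μ) • x = ∫ q in s, φ q • q ∂μ)
    (hJ : IntegrableOn (fun q => φ q * ‖q - x‖ ^ 2) s μ)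
    (hG : IntegrableOn (fun q => φ q * sqDistToNearest p q) s μ) :
    ∫ q in s, φ q * sqDistToNearest p q ∂μ
      ≤ (∫ q in s, φ q ∂μ) * sqDistToNearest p x + ∫ q in s, φ q * ‖q - x‖ ^ 2 ∂μ := by
  obtain ⟨b, -, hb⟩ := exists_mem_voronoiCell_sqDistToNearest_eq p x
  calc ∫ q in s, φ q * sqDistToNearest p q ∂μ ≤ ∫ q in s, φ q * ‖q - p b‖ ^ 2 ∂μ :=
        setIntegral_mono_on hG (hφ.mul_norm_sub_sq hφq hJ (p b)) hs fun q hq =>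
          mul_le_mul_of_nonneg_left (sqDistToNearest_le p q b) (hφ₀ q hq)
    _ = _ := by rw [setIntegral_mul_norm_sub_sq_eq hφ hφq hx hJ, hb, add_comm]

lemma le_setIntegral_mul_sqDistToNearest_add (p : ι → E) {r D : ℝ} (hs : MeasurableSet s)
    (hφ₀ : ∀ q ∈ s, 0 ≤ φ q) (hφ : IntegrableOn φ s μ)
    (hφq : IntegrableOn (fun q => φ q • q) s μ)
    (hx : (∫ q in s, φ q ∂μ) • x = ∫ q in s, φ q • q ∂μ)
    (hJ : IntegrableOn (fun q => φ q * ‖q - x‖ ^ 2) s μ)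
    (hG : IntegrableOn (fun q => φ q * sqDistToNearest p q) s μ)
    (hr : ∀ q ∈ s, ‖q - x‖ ≤ r)
    (hD : ∀ a b, (s ∩ voronoiCell p a).Nonempty → (s ∩ voronoiCell p b).Nonempty →
      ‖p a - p b‖ ≤ D) :
    (∫ q in s, φ q ∂μ) * sqDistToNearest p x + ∫ q in s, φ q * ‖q - x‖ ^ 2 ∂μ
      ≤ ∫ q in s, φ q * sqDistToNearest p q ∂μ + 2 * r * D * ∫ q in s, φ q ∂μ := by
  rcases s.eq_empty_or_nonempty with rfl | ⟨q₀, hq₀⟩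
  · simp
  obtain ⟨a₀, ha₀, -⟩ := exists_mem_voronoiCell_sqDistToNearest_eq p q₀
  have hmom := (hφ.mul_inner_sub hφq x (x - p a₀)).const_mul 2
  have hpt : ∀ q ∈ s, sqDistToNearest p x * φ q + φ q * ‖q - x‖ ^ 2
      ≤ φ q * sqDistToNearest p q - 2 * (φ q * ⟪q - x, x - p a₀⟫_ℝ) + 2 * r * D * φ q := by
    intro q hq
    have := mul_le_mul_of_nonneg_left (sqDistToNearest_add_norm_sub_sq_le (hr q hq)
      fun a ha => hD a a₀ ⟨q, hq, ha⟩ ⟨q₀, hq₀, ha₀⟩) (hφ₀ q hq)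
    linarith
  have hR : IntegrableOn
      (fun q => φ q * sqDistToNearest p q - 2 * (φ q * ⟪q - x, x - p a₀⟫_ℝ)) s μ :=
    hG.sub hmom
  calc _ = ∫ q in s, (sqDistToNearest p x * φ q + φ q * ‖q - x‖ ^ 2) ∂μ := by
        rw [integral_add (hφ.const_mul _) hJ, integral_const_mul, mul_comm]
    _ ≤ _ := setIntegral_mono_on (by exact (hφ.const_mul _).add hJ)
        (by exact hR.add (hφ.const_mul _)) hs hpt
    _ = _ := by
        rw [integral_add hR (hφ.const_mul _), integral_sub hG hmom, integral_const_mul,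
          integral_const_mul, setIntegral_mul_inner_sub_eq_zero hφ hφq hx]
        ring

end Voronoi

theorem coverage_discretization_bounds_general {n k : ℕ} (hk : 0 < k)
    (ε Dmax : ℝ)
    (Q : Set (EuclideanSpace ℝ (Fin 2)))
    (C : Fin n → Set (EuclideanSpace ℝ (Fin 2)))
    (hCmeas : ∀ i, MeasurableSet (C i))
    (hCdisj : ∀ i l, i ≠ l → C i ∩ C l = ∅)
    (hCunion : (⋃ i, C i) = Q)
    (φ : EuclideanSpace ℝ (Fin 2) → ℝ) (hφ : ∀ q, 0 ≤ φ q)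
    (hφint : IntegrableOn φ Q)
    (hφint₁ : IntegrableOn (fun q => φ q • q) Q)
    (hφnorm : (∫ q in Q, φ q) = 1)
    (p : Fin k → EuclideanSpace ℝ (Fin 2))
    (hint : IntegrableOn
      (fun q => φ q * (Finset.univ.inf' (univ_nonempty_iff.mpr
        ⟨⟨0, hk⟩⟩) fun j => ‖q - p j‖ ^ 2)) Q)
    (w : Fin n → ℝ) (hw : ∀ i, w i = ∫ q in C i, φ q) (hwpos : ∀ i, 0 < w i)
    (x : Fin n → EuclideanSpace ℝ (Fin 2))
    (hx : ∀ i, x i = (w i)⁻¹ • ∫ q in C i, φ q • q)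
    (J : Fin n → ℝ) (hJ : ∀ i, J i = ∫ q in C i, φ q * ‖q - x i‖ ^ 2)
    -- every point of a cell is within √2·ε of the cell centroid (grid of mesh ε)
    (hmesh : ∀ i, ∀ q ∈ C i, ‖q - x i‖ ≤ Real.sqrt 2 * ε)
    -- Dmax bounds the distance between centers whose Voronoi cells meet a common cell
    (hD : ∀ i (a b : Fin k),
      (C i ∩ {q | ∀ l, ‖q - p a‖ ≤ ‖q - p l‖}).Nonempty →
      (C i ∩ {q | ∀ l, ‖q - p b‖ ≤ ‖q - p l‖}).Nonempty →
      ‖p a - p b‖ ≤ Dmax) :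
    (∫ q in Q, φ q * (Finset.univ.inf' (univ_nonempty_iff.mpr
          ⟨⟨0, hk⟩⟩) fun j => ‖q - p j‖ ^ 2))
        ≤ (∑ i, w i * (Finset.univ.inf' (univ_nonempty_iff.mpr
          ⟨⟨0, hk⟩⟩) fun j => ‖x i - p j‖ ^ 2)) + ∑ i, J i
    ∧ (∑ i, w i * (Finset.univ.inf' (univ_nonempty_iff.mpr
          ⟨⟨0, hk⟩⟩) fun j => ‖x i - p j‖ ^ 2)) + ∑ i, J i
        ≤ (∫ q in Q, φ q * (Finset.univ.inf' (univ_nonempty_iff.mpr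
          ⟨⟨0, hk⟩⟩) fun j => ‖q - p j‖ ^ 2)) + 2 * Real.sqrt 2 * Dmax * ε := by
  have : Nonempty (Fin k) := ⟨⟨0, hk⟩⟩
  change ∫ q in Q, φ q * sqDistToNearest p q ≤ ∑ i, w i * sqDistToNearest p (x i) + ∑ i, J i ∧
    ∑ i, w i * sqDistToNearest p (x i) + ∑ i, J i
      ≤ (∫ q in Q, φ q * sqDistToNearest p q) + 2 * Real.sqrt 2 * Dmax * ε
  subst hCunion
  have hdisj : Pairwise (Function.onFun Disjoint C) := fun i l hil =>
    Set.disjoint_iff_inter_eq_empty.mpr (hCdisj i l hil)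
  have hφC i : IntegrableOn φ (C i) := hφint.mono_set (Set.subset_iUnion C i)
  have hφqC i : IntegrableOn (fun q => φ q • q) (C i) := hφint₁.mono_set (Set.subset_iUnion C i)
  have hGC i : IntegrableOn (fun q => φ q * sqDistToNearest p q) (C i) :=
    hint.mono_set (Set.subset_iUnion C i)
  have hJC i := (hφC i).mul_norm_sub_sq_of_norm_le (hCmeas i) (hmesh i)
  have hcentroid i : (∫ q in C i, φ q) • x i = ∫ q in C i, φ q • q := by
    rw [hx i, ← hw i, smul_inv_smul₀ (hwpos i).ne']
  have hwsum : ∑ i, w i = 1 := by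
    rw [← hφnorm, integral_iUnion_fintype hCmeas hdisj hφC]; exact sum_congr rfl fun i _ => hw i
  have hupper i : ∫ q in C i, φ q * sqDistToNearest p q ≤ w i * sqDistToNearest p (x i) + J i := by
    rw [hw i, hJ i]
    exact setIntegral_mul_sqDistToNearest_le p (hCmeas i) (fun q _ => hφ q) (hφC i) (hφqC i)
      (hcentroid i) (hJC i) (hGC i)
  have hlower i : w i * sqDistToNearest p (x i) + J i
      ≤ (∫ q in C i, φ q * sqDistToNearest p q) + 2 * (Real.sqrt 2 * ε) * Dmax * w i := by
    rw [hw i, hJ i]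
    exact le_setIntegral_mul_sqDistToNearest_add p (hCmeas i) (fun q _ => hφ q) (hφC i) (hφqC i)
      (hcentroid i) (hJC i) (hGC i) (hmesh i) (hD i)
  rw [integral_iUnion_fintype hCmeas hdisj hGC, ← sum_add_distrib]
  refine ⟨sum_le_sum fun i _ => hupper i, (sum_le_sum fun i _ => hlower i).trans_eq ?_⟩
  rw [sum_add_distrib, ← mul_sum, hwsum]
  ring

theorem coverage_discretization_bounds {n k : ℕ} (hk : 0 < k)
    (ε Dmax : ℝ) (hε : 0 < ε) (hDmax : 0 ≤ Dmax)
    (Q : Set (EuclideanSpace ℝ (Fin 2))) (hQ : MeasurableSet Q)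
    (C : Fin n → Set (EuclideanSpace ℝ (Fin 2)))
    (hCmeas : ∀ i, MeasurableSet (C i))
    (hCdisj : ∀ i l, i ≠ l → C i ∩ C l = ∅)
    (hCunion : (⋃ i, C i) = Q)
    (φ : EuclideanSpace ℝ (Fin 2) → ℝ) (hφ : ∀ q, 0 ≤ φ q)
    (hφint : IntegrableOn φ Q)
    (hφint₁ : IntegrableOn (fun q => φ q • q) Q)
    (hφnorm : (∫ q in Q, φ q) = 1)
    (p : Fin k → EuclideanSpace ℝ (Fin 2))
    (hint : IntegrableOn
      (fun q => φ q * (Finset.univ.inf' (univ_nonempty_iff.mpr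
        ⟨⟨0, hk⟩⟩) fun j => ‖q - p j‖ ^ 2)) Q)
    (w : Fin n → ℝ) (hw : ∀ i, w i = ∫ q in C i, φ q) (hwpos : ∀ i, 0 < w i)
    (x : Fin n → EuclideanSpace ℝ (Fin 2))
    (hx : ∀ i, x i = (w i)⁻¹ • ∫ q in C i, φ q • q)
    (J : Fin n → ℝ) (hJ : ∀ i, J i = ∫ q in C i, φ q * ‖q - x i‖ ^ 2)
    -- every point of a cell is within √2·ε of the cell centroid (grid of mesh ε)
    (hmesh : ∀ i, ∀ q ∈ C i, ‖q - x i‖ ≤ Real.sqrt 2 * ε)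
    -- Dmax bounds the distance between centers whose Voronoi cells meet a common cell
    (hD : ∀ i (a b : Fin k),
      (C i ∩ {q | ∀ l, ‖q - p a‖ ≤ ‖q - p l‖}).Nonempty →
      (C i ∩ {q | ∀ l, ‖q - p b‖ ≤ ‖q - p l‖}).Nonempty →
      ‖p a - p b‖ ≤ Dmax) :
    (∫ q in Q, φ q * (Finset.univ.inf' (univ_nonempty_iff.mpr
          ⟨⟨0, hk⟩⟩) fun j => ‖q - p j‖ ^ 2))
        ≤ (∑ i, w i * (Finset.univ.inf' (univ_nonempty_iff.mpr
          ⟨⟨0, hk⟩⟩) fun j => ‖x i - p j‖ ^ 2)) + ∑ i, J i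
    ∧ (∑ i, w i * (Finset.univ.inf' (univ_nonempty_iff.mpr
          ⟨⟨0, hk⟩⟩) fun j => ‖x i - p j‖ ^ 2)) + ∑ i, J i
        ≤ (∫ q in Q, φ q * (Finset.univ.inf' (univ_nonempty_iff.mpr
          ⟨⟨0, hk⟩⟩) fun j => ‖q - p j‖ ^ 2)) + 2 * Real.sqrt 2 * Dmax * ε :=
  coverage_discretization_bounds_general hk ε Dmax Q C hCmeas hCdisj hCunion φ hφ hφint hφint₁
    hφnorm p hint w hw hwpos x hx J hJ hmesh hD
end

section
/- Let X = {x₁,...,x_n} ⊆ ℝ^d with weights w_i ≥ 0 and let Φ_OPT be the minimum over all k-point sets P of Φ(P) = Σ_i w_i min_{p∈P} ‖x_i - p‖². If P is chosen by weighted-D² sampling (first center chosen with probability ∝ w_i; each subsequent center chosen with probability ∝ w_i·D(x_i)² where D is the distance to the already-chosen centers), then E[Φ(P)] ≤ 8(ln k + 2)·Φ_OPT. -/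
/-!
Fix `k` centers `P` and split `X` into the clusters of the nearest-center map of `P`; the
centroid costs of these clusters sum to at most the cost of `P`. Drawing the first center of a
cluster with probability `∝ w` costs that cluster twice its centroid cost in expectation, and
drawing it by `D²`-weighting costs at most eight times its centroid cost (Lemmas 3.1 and 3.2 of
Arthur–Vassilvitskii, with weights). Induction on the number `t` of draws still to be made
(Lemma 3.3) controls the clusters that are never hit: a draw landing in an already covered
cluster wastes at most a `1 / (t + 1)` share of the current potential, and these shares add up to
the harmonic number `H (k - 1) ≤ 1 + log k`.
-/

open Finset

/-- Distance from a point `q` to the set of already-chosen centers `{x j : j ∈ S}`. -/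
noncomputable def distToCenters {d : ℕ} {ι : Type*} [DecidableEq ι]
    (x : ι → EuclideanSpace ℝ (Fin d)) (S : Finset ι)
    (q : EuclideanSpace ℝ (Fin d)) : ℝ :=
  if h : S.Nonempty then S.inf' h (fun j => ‖q - x j‖) else 0

/-- Weighted k-means cost of the point set `X` against an arbitrary finite center set `P`. -/
noncomputable def kmeansCost {d : ℕ} {ι : Type*}
    (X : Finset ι) (x : ι → EuclideanSpace ℝ (Fin d)) (w : ι → ℝ)
    (P : Finset (EuclideanSpace ℝ (Fin d))) : ℝ :=
  ∑ i ∈ X, w i * (if h : P.Nonempty then P.inf' h (fun p => ‖x i - p‖) else 0) ^ 2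

/-- Weighted k-means cost of `X` against the centers indexed by `S ⊆ X`. -/
noncomputable def costIdx {d : ℕ} {ι : Type*} [DecidableEq ι]
    (X : Finset ι) (x : ι → EuclideanSpace ℝ (Fin d)) (w : ι → ℝ)
    (S : Finset ι) : ℝ :=
  ∑ i ∈ X, w i * (distToCenters x S (x i)) ^ 2

/-- Expected final cost of weighted-D² sampling: starting from the chosen
centers `S`, `t` further centers are drawn, each with probability proportional
to `w i · D(x i)²`. -/
noncomputable def expCostD2 {d : ℕ} {ι : Type*} [DecidableEq ι]
    (X : Finset ι) (x : ι → EuclideanSpace ℝ (Fin d)) (w : ι → ℝ) :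
    Finset ι → ℕ → ℝ
  | S, 0 => costIdx X x w S
  | S, (t + 1) => ∑ i ∈ X,
      (w i * (distToCenters x S (x i)) ^ 2 /
        ∑ j ∈ X, w j * (distToCenters x S (x j)) ^ 2) *
      expCostD2 X x w (insert i S) t

section DistToCenters
variable {d : ℕ} {ι : Type*} [DecidableEq ι] (x : ι → EuclideanSpace ℝ (Fin d))

lemma distToCenters_nonneg (S : Finset ι) (q : EuclideanSpace ℝ (Fin d)) :
    0 ≤ distToCenters x S q := by
  unfold distToCenters
  split
  · exact le_inf' _ _ fun j _ => norm_nonneg _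
  · exact le_rfl

lemma distToCenters_singleton (j : ι) (q : EuclideanSpace ℝ (Fin d)) :
    distToCenters x {j} q = ‖q - x j‖ := by
  simp [distToCenters]

lemma distToCenters_anti {S S' : Finset ι} (hS : S.Nonempty) (h : S ⊆ S')
    (q : EuclideanSpace ℝ (Fin d)) : distToCenters x S' q ≤ distToCenters x S q := by
  unfold distToCenters
  rw [dif_pos hS, dif_pos (hS.mono h)]
  exact inf'_mono _ h hS

lemma distToCenters_le_norm_sub_add {S : Finset ι} (hS : S.Nonempty)
    (p q : EuclideanSpace ℝ (Fin d)) :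
    distToCenters x S p ≤ ‖p - q‖ + distToCenters x S q := by
  obtain ⟨j, hj, hq⟩ := exists_mem_eq_inf' hS fun j => ‖q - x j‖
  unfold distToCenters
  rw [dif_pos hS, dif_pos hS, hq]
  exact (inf'_le _ hj).trans (norm_sub_le_norm_sub_add_norm_sub p q (x j))

lemma distToCenters_of_fin_zero (x : ι → EuclideanSpace ℝ (Fin 0)) (S : Finset ι)
    (q : EuclideanSpace ℝ (Fin 0)) : distToCenters x S q = 0 := by
  have h0 : ∀ j, ‖q - x j‖ = 0 := fun j => by rw [Subsingleton.elim q (x j), sub_self, norm_zero]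
  unfold distToCenters
  split
  · simp only [h0, inf'_const]
  · rfl

end DistToCenters

section CostIdx
variable {d : ℕ} {ι : Type*} [DecidableEq ι] {A : Finset ι}
  {x : ι → EuclideanSpace ℝ (Fin d)} {w : ι → ℝ}

lemma costIdx_nonneg (hw : ∀ i ∈ A, 0 ≤ w i) (S : Finset ι) : 0 ≤ costIdx A x w S :=
  sum_nonneg fun i hi => mul_nonneg (hw i hi) (sq_nonneg _)

lemma costIdx_anti (hw : ∀ i ∈ A, 0 ≤ w i) {S S' : Finset ι} (hS : S.Nonempty) (h : S ⊆ S') :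
    costIdx A x w S' ≤ costIdx A x w S :=
  sum_le_sum fun i hi => mul_le_mul_of_nonneg_left
    (pow_le_pow_left₀ (distToCenters_nonneg _ _ _) (distToCenters_anti x hS h _) 2) (hw i hi)

lemma costIdx_singleton (a : ι) :
    costIdx A x w {a} = ∑ j ∈ A, w j * ‖x j - x a‖ ^ 2 := by
  simp only [costIdx, distToCenters_singleton]

end CostIdx

section Centroid
variable {E : Type*} [NormedAddCommGroup E] [InnerProductSpace ℝ E] {ι : Type*}
  (x : ι → E) (w : ι → ℝ) (A : Finset ι)

noncomputable def weightedCentroid : E := (∑ i ∈ A, w i)⁻¹ • ∑ i ∈ A, w i • x i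

noncomputable def centroidCost : ℝ := ∑ i ∈ A, w i * ‖x i - weightedCentroid x w A‖ ^ 2

variable {x w A}

lemma centroidCost_nonneg (hw : ∀ i ∈ A, 0 ≤ w i) : 0 ≤ centroidCost x w A :=
  sum_nonneg fun i hi => mul_nonneg (hw i hi) (sq_nonneg _)

lemma sum_smul_sub_weightedCentroid (hW : ∑ i ∈ A, w i ≠ 0) :
    ∑ i ∈ A, w i • (x i - weightedCentroid x w A) = 0 := by
  rw [show ∑ i ∈ A, w i • (x i - weightedCentroid x w A)
      = ∑ i ∈ A, w i • x i - (∑ i ∈ A, w i) • weightedCentroid x w A by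
    simp only [smul_sub, sum_sub_distrib, sum_smul]]
  rw [weightedCentroid, smul_smul, mul_inv_cancel₀ hW, one_smul, sub_self]

lemma sum_mul_norm_sub_sq_eq (hW : ∑ i ∈ A, w i ≠ 0) (z : E) :
    ∑ i ∈ A, w i * ‖x i - z‖ ^ 2
      = centroidCost x w A + (∑ i ∈ A, w i) * ‖z - weightedCentroid x w A‖ ^ 2 := by
  set c := weightedCentroid x w A
  have hcross : ∑ i ∈ A, w i * inner ℝ (x i - c) (z - c) = 0 := by
    simp only [← real_inner_smul_left, ← sum_inner]
    rw [sum_smul_sub_weightedCentroid hW, inner_zero_left]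
  have hsplit : ∀ i ∈ A, w i * ‖x i - z‖ ^ 2
      = w i * ‖x i - c‖ ^ 2 - 2 * (w i * inner ℝ (x i - c) (z - c)) + w i * ‖z - c‖ ^ 2 := by
    intro i _
    rw [show x i - z = (x i - c) - (z - c) by abel, norm_sub_sq_real]
    ring
  rw [sum_congr rfl hsplit, sum_add_distrib, sum_sub_distrib, ← mul_sum, hcross, ← sum_mul,
    centroidCost]
  ring

lemma sum_eq_zero_of_sum_weight_eq_zero (hw : ∀ i ∈ A, 0 ≤ w i) (hW : ∑ i ∈ A, w i = 0)
    (g : ι → ℝ) : ∑ i ∈ A, w i * g i = 0 :=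
  sum_eq_zero fun i hi => by rw [(sum_eq_zero_iff_of_nonneg hw).1 hW i hi, zero_mul]

lemma centroidCost_le (hw : ∀ i ∈ A, 0 ≤ w i) (z : E) :
    centroidCost x w A ≤ ∑ i ∈ A, w i * ‖x i - z‖ ^ 2 := by
  by_cases hW : ∑ i ∈ A, w i = 0
  · rw [centroidCost, sum_eq_zero_of_sum_weight_eq_zero hw hW,
      sum_eq_zero_of_sum_weight_eq_zero hw hW]
  · rw [sum_mul_norm_sub_sq_eq hW z]
    have := sum_nonneg hw
    nlinarith [sq_nonneg ‖z - weightedCentroid x w A‖]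

lemma sum_mul_sum_mul_norm_sub_sq (hw : ∀ i ∈ A, 0 ≤ w i) :
    ∑ a ∈ A, w a * ∑ j ∈ A, w j * ‖x j - x a‖ ^ 2
      = 2 * (∑ i ∈ A, w i) * centroidCost x w A := by
  by_cases hW : ∑ i ∈ A, w i = 0
  · rw [sum_eq_zero_of_sum_weight_eq_zero hw hW, hW, mul_zero, zero_mul]
  · simp only [sum_mul_norm_sub_sq_eq hW, mul_add, sum_add_distrib, ← sum_mul]
    rw [show ∑ a ∈ A, w a * ((∑ i ∈ A, w i) * ‖x a - weightedCentroid x w A‖ ^ 2)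
        = (∑ i ∈ A, w i) * centroidCost x w A by
      rw [centroidCost, mul_sum]; exact sum_congr rfl fun a _ => by ring]
    ring

end Centroid

section ClusterSampling
variable {d : ℕ} {ι : Type*} [DecidableEq ι] {A S : Finset ι}
  {x : ι → EuclideanSpace ℝ (Fin d)} {w : ι → ℝ}

lemma sum_weight_mul_distToCenters_sq_le (hw : ∀ i ∈ A, 0 ≤ w i) (hS : S.Nonempty) (a : ι) :
    (∑ i ∈ A, w i) * distToCenters x S (x a) ^ 2
      ≤ 2 * costIdx A x w S + 2 * costIdx A x w {a} := by
  rw [costIdx_singleton, costIdx, sum_mul, mul_sum, mul_sum, ← sum_add_distrib]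
  refine sum_le_sum fun j hj => ?_
  have htri := distToCenters_le_norm_sub_add x hS (x a) (x j)
  rw [norm_sub_rev] at htri
  have hDj := distToCenters_nonneg x S (x j)
  have hsq : distToCenters x S (x a) ^ 2
      ≤ 2 * distToCenters x S (x j) ^ 2 + 2 * ‖x j - x a‖ ^ 2 := by
    nlinarith [distToCenters_nonneg x S (x a), sq_nonneg (distToCenters x S (x j) - ‖x j - x a‖)]
  nlinarith [hw j hj]

/-- Lemma 3.2 of Arthur–Vassilvitskii, unnormalised: the sum is the expected new cost of the
cluster `A`, times its current cost, when the next center is drawn from `A` by D²-weighting. -/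
lemma sum_mul_costIdx_insert_le (hw : ∀ i ∈ A, 0 ≤ w i) (hS : S.Nonempty) :
    ∑ a ∈ A, w a * distToCenters x S (x a) ^ 2 * costIdx A x w (insert a S)
      ≤ 8 * centroidCost x w A * costIdx A x w S := by
  set W := ∑ i ∈ A, w i
  set Φ := costIdx A x w S
  have hΦ : 0 ≤ Φ := costIdx_nonneg hw S
  have hφ : 0 ≤ centroidCost x w A := centroidCost_nonneg hw
  rcases (sum_nonneg hw).eq_or_lt with hW | hW
  · rw [sum_eq_zero fun a ha => by
      rw [(sum_eq_zero_iff_of_nonneg hw).1 hW.symm a ha, zero_mul, zero_mul]]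
    positivity
  have hterm : ∀ a ∈ A, W * (w a * distToCenters x S (x a) ^ 2 * costIdx A x w (insert a S))
      ≤ 4 * Φ * (w a * costIdx A x w {a}) := by
    intro a ha
    have hT : 0 ≤ costIdx A x w (insert a S) := costIdx_nonneg hw _
    have hTΦ : costIdx A x w (insert a S) ≤ Φ := costIdx_anti hw hS (subset_insert a S)
    have hTa : costIdx A x w (insert a S) ≤ costIdx A x w {a} :=
      costIdx_anti hw (singleton_nonempty a) (singleton_subset_iff.2 (mem_insert_self a S))
    have hD := sum_weight_mul_distToCenters_sq_le (x := x) hw hS a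
    have hwa := hw a ha
    calc W * (w a * distToCenters x S (x a) ^ 2 * costIdx A x w (insert a S))
        = w a * (W * distToCenters x S (x a) ^ 2) * costIdx A x w (insert a S) := by ring
      _ ≤ w a * (2 * Φ + 2 * costIdx A x w {a}) * costIdx A x w (insert a S) := by gcongr
      _ = 2 * (w a * Φ) * costIdx A x w (insert a S)
          + 2 * (w a * costIdx A x w {a}) * costIdx A x w (insert a S) := by ring
      _ ≤ 2 * (w a * Φ) * costIdx A x w {a} + 2 * (w a * costIdx A x w {a}) * Φ := by
        have : 0 ≤ costIdx A x w {a} := costIdx_nonneg hw _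
        gcongr
      _ = 4 * Φ * (w a * costIdx A x w {a}) := by ring
  refine le_of_mul_le_mul_left ?_ hW
  calc W * ∑ a ∈ A, w a * distToCenters x S (x a) ^ 2 * costIdx A x w (insert a S)
      ≤ 4 * Φ * ∑ a ∈ A, w a * costIdx A x w {a} := by
        rw [mul_sum, mul_sum]; exact sum_le_sum hterm
    _ = W * (8 * centroidCost x w A * Φ) := by
        simp only [costIdx_singleton, sum_mul_sum_mul_norm_sub_sq hw]
        ring

end ClusterSampling

section Fibers
variable {ι κ M : Type*} [DecidableEq κ] [AddCommMonoid M] {X : Finset ι} {f : ι → κ}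
  {U : Finset κ} {q : κ}

lemma sum_filter_not_mem_erase (hq : q ∈ U) (g : ι → M) :
    ∑ i ∈ X with f i ∉ U.erase q, g i
      = ∑ i ∈ X with f i = q, g i + ∑ i ∈ X with f i ∉ U, g i := by
  simp only [sum_filter, ← sum_add_distrib, mem_erase]
  refine sum_congr rfl fun i _ => ?_
  by_cases hi : f i = q
  · simp [hi, hq]
  · simp [hi]

lemma sum_filter_mem_erase_add (hq : q ∈ U) (g : ι → M) :
    ∑ i ∈ X with f i ∈ U.erase q, g i + ∑ i ∈ X with f i = q, g i
      = ∑ i ∈ X with f i ∈ U, g i := by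
  simp only [sum_filter, ← sum_add_distrib, mem_erase]
  refine sum_congr rfl fun i _ => ?_
  by_cases hi : f i = q
  · simp [hi, hq]
  · simp [hi]

end Fibers

lemma sq_sum_sub_sum_sq_le {κ : Type*} (U : Finset κ) (g : κ → ℝ) :
    (∑ q ∈ U, g q) ^ 2 - ∑ q ∈ U, g q ^ 2 ≤ ((#U - 1 : ℝ) / #U) * (∑ q ∈ U, g q) ^ 2 := by
  rcases U.eq_empty_or_nonempty with rfl | hU
  · simp
  have hcard : (0 : ℝ) < #U := by exact_mod_cast hU.card_pos
  have hCS := sq_sum_le_card_mul_sum_sq (s := U) (f := g)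
  rw [sub_div, div_self hcard.ne', sub_mul, one_mul, sub_le_sub_iff_left, div_mul_eq_mul_div,
    one_mul, div_le_iff₀ hcard]
  linarith

lemma harmonic_cast_nonneg (n : ℕ) : (0 : ℝ) ≤ harmonic n := by
  unfold harmonic; positivity

section ClusterCentroidCost
variable {E : Type*} [NormedAddCommGroup E] [InnerProductSpace ℝ E] {ι κ : Type*} [DecidableEq κ]
  {X : Finset ι} {x : ι → E} {w : ι → ℝ} {f : ι → κ} {U : Finset κ}

noncomputable def clusterCentroidCost (X : Finset ι) (x : ι → E)
    (w : ι → ℝ) (f : ι → κ) (U : Finset κ) : ℝ :=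
  ∑ q ∈ U, centroidCost x w {i ∈ X | f i = q}

lemma clusterCentroidCost_nonneg (hw : ∀ i ∈ X, 0 ≤ w i) :
    0 ≤ clusterCentroidCost X x w f U :=
  sum_nonneg fun _ _ => centroidCost_nonneg fun i hi => hw i (mem_filter.1 hi).1

lemma clusterCentroidCost_erase {q : κ} (hq : q ∈ U) :
    clusterCentroidCost X x w f (U.erase q)
      = clusterCentroidCost X x w f U - centroidCost x w {i ∈ X | f i = q} :=
  sum_erase_eq_sub hq

end ClusterCentroidCost

section Induction
variable {d : ℕ} {ι κ : Type*} [DecidableEq ι] [DecidableEq κ]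
  {X : Finset ι} {x : ι → EuclideanSpace ℝ (Fin d)} {w : ι → ℝ} {f : ι → κ}
  {U : Finset κ} {S : Finset ι} {t : ℕ}

/-- The right-hand side of Lemma 3.3 of Arthur–Vassilvitskii, for the clustering of `X` into the
fibers of `f`: `U` plays the role of the uncovered clusters and `t` is the number of centers
still to be drawn. -/
noncomputable def d2SamplingBound (X : Finset ι) (x : ι → EuclideanSpace ℝ (Fin d))
    (w : ι → ℝ) (f : ι → κ) (U : Finset κ) (S : Finset ι) (t : ℕ) : ℝ :=
  (costIdx {i ∈ X | f i ∉ U} x w S + 8 * clusterCentroidCost X x w f U) * (1 + harmonic t)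
    + ((#U - t : ℝ) / #U) * costIdx {i ∈ X | f i ∈ U} x w S

lemma d2SamplingBound_nonneg (hw : ∀ i ∈ X, 0 ≤ w i) (ht : t ≤ #U) :
    0 ≤ d2SamplingBound X x w f U S t := by
  have := harmonic_cast_nonneg t
  have : (t : ℝ) ≤ #U := by exact_mod_cast ht
  have : 0 ≤ costIdx {i ∈ X | f i ∉ U} x w S :=
    costIdx_nonneg (fun i hi => hw i (mem_filter.1 hi).1) S
  have : 0 ≤ costIdx {i ∈ X | f i ∈ U} x w S :=
    costIdx_nonneg (fun i hi => hw i (mem_filter.1 hi).1) S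
  have := clusterCentroidCost_nonneg hw (x := x) (f := f) (U := U)
  unfold d2SamplingBound
  positivity

lemma costIdx_le_d2SamplingBound_zero (hw : ∀ i ∈ X, 0 ≤ w i) :
    costIdx X x w S ≤ d2SamplingBound X x w f U S 0 := by
  have hsplit : costIdx X x w S
      = costIdx {i ∈ X | f i ∈ U} x w S + costIdx {i ∈ X | f i ∉ U} x w S :=
    (sum_filter_add_sum_filter_not X _ _).symm
  have := clusterCentroidCost_nonneg hw (x := x) (f := f) (U := U)
  rw [hsplit, d2SamplingBound, harmonic_zero, Rat.cast_zero, add_zero, mul_one, Nat.cast_zero,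
    sub_zero]
  rcases U.eq_empty_or_nonempty with rfl | hU
  · simp [costIdx, clusterCentroidCost]
  · rw [div_self (by exact_mod_cast hU.card_pos.ne')]
    linarith

lemma mul_expCostD2_succ (hZ : costIdx X x w S ≠ 0) :
    costIdx X x w S * expCostD2 X x w S (t + 1)
      = ∑ i ∈ X, w i * distToCenters x S (x i) ^ 2 * expCostD2 X x w (insert i S) t := by
  rw [expCostD2, mul_sum]
  refine sum_congr rfl fun i _ => ?_
  rw [← costIdx, div_mul_eq_mul_div, mul_div_assoc', mul_div_cancel_left₀ _ hZ]

lemma d2SamplingBound_insert_le (hw : ∀ i ∈ X, 0 ≤ w i) (hS : S.Nonempty) (ht : t ≤ #U)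
    (a : ι) : d2SamplingBound X x w f U (insert a S) t ≤ d2SamplingBound X x w f U S t := by
  have := harmonic_cast_nonneg t
  have hcoef : (0 : ℝ) ≤ (#U - t) / #U := div_nonneg (by simpa using ht) (Nat.cast_nonneg _)
  unfold d2SamplingBound
  gcongr
  · exact costIdx_anti (fun i hi => hw i (mem_filter.1 hi).1) hS (subset_insert a S)
  · exact costIdx_anti (fun i hi => hw i (mem_filter.1 hi).1) hS (subset_insert a S)

lemma d2SamplingBound_erase_insert_le (hw : ∀ i ∈ X, 0 ≤ w i) (hS : S.Nonempty) {q : κ}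
    (hq : q ∈ U) (ht : t + 1 ≤ #U) (a : ι) :
    d2SamplingBound X x w f (U.erase q) (insert a S) t
      ≤ (costIdx {i ∈ X | f i ∉ U} x w S + costIdx {i ∈ X | f i = q} x w (insert a S)
          + 8 * (clusterCentroidCost X x w f U - centroidCost x w {i ∈ X | f i = q}))
          * (1 + harmonic t)
        + ((#U - 1 - t : ℝ) / (#U - 1))
          * (costIdx {i ∈ X | f i ∈ U} x w S - costIdx {i ∈ X | f i = q} x w S) := by
  have := harmonic_cast_nonneg t
  have hcard : (#(U.erase q) : ℝ) = #U - 1 := by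
    rw [card_erase_of_mem hq, Nat.cast_sub (by omega), Nat.cast_one]
  have hcoef : (0 : ℝ) ≤ (#U - 1 - t) / (#U - 1) := by
    have : (t : ℝ) + 1 ≤ #U := by exact_mod_cast ht
    exact div_nonneg (by linarith) (by linarith)
  have hcovered : costIdx {i ∈ X | f i ∉ U.erase q} x w (insert a S)
      ≤ costIdx {i ∈ X | f i = q} x w (insert a S) + costIdx {i ∈ X | f i ∉ U} x w S := by
    rw [costIdx, sum_filter_not_mem_erase hq, ← costIdx, ← costIdx]
    gcongr
    exact costIdx_anti (fun i hi => hw i (mem_filter.1 hi).1) hS (subset_insert a S)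
  have huncovered : costIdx {i ∈ X | f i ∈ U.erase q} x w (insert a S)
      ≤ costIdx {i ∈ X | f i ∈ U} x w S - costIdx {i ∈ X | f i = q} x w S := by
    unfold costIdx
    rw [← sum_filter_mem_erase_add hq, add_sub_cancel_right]
    exact costIdx_anti (fun i hi => hw i (mem_filter.1 hi).1) hS (subset_insert a S)
  rw [d2SamplingBound, clusterCentroidCost_erase hq, hcard]
  gcongr
  linarith

lemma sum_covered_mul_expCostD2_le (hw : ∀ i ∈ X, 0 ≤ w i) (hS : S.Nonempty) (ht : t ≤ #U)
    (ih : ∀ S' : Finset ι, S'.Nonempty →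
      expCostD2 X x w S' t ≤ d2SamplingBound X x w f U S' t) :
    ∑ i ∈ X with f i ∉ U, w i * distToCenters x S (x i) ^ 2 * expCostD2 X x w (insert i S) t
      ≤ costIdx {i ∈ X | f i ∉ U} x w S * d2SamplingBound X x w f U S t := by
  rw [costIdx, sum_mul]
  refine sum_le_sum fun i hi => ?_
  have := hw i (mem_filter.1 hi).1
  gcongr
  exact (ih _ (insert_nonempty i S)).trans (d2SamplingBound_insert_le hw hS ht i)

lemma sum_fiber_mul_expCostD2_le (hw : ∀ i ∈ X, 0 ≤ w i) (hS : S.Nonempty) {q : κ}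
    (hq : q ∈ U) (ht : t + 1 ≤ #U)
    (ih : ∀ S' : Finset ι, S'.Nonempty →
      expCostD2 X x w S' t ≤ d2SamplingBound X x w f (U.erase q) S' t) :
    ∑ a ∈ X with f a = q, w a * distToCenters x S (x a) ^ 2 * expCostD2 X x w (insert a S) t
      ≤ costIdx {i ∈ X | f i = q} x w S
        * ((costIdx {i ∈ X | f i ∉ U} x w S + 8 * clusterCentroidCost X x w f U)
            * (1 + harmonic t)
          + ((#U - 1 - t : ℝ) / (#U - 1))
            * (costIdx {i ∈ X | f i ∈ U} x w S - costIdx {i ∈ X | f i = q} x w S)) := by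
  set A := {i ∈ X | f i = q}
  set H : ℝ := 1 + harmonic t
  set R := ((#U - 1 - t : ℝ) / (#U - 1))
    * (costIdx {i ∈ X | f i ∈ U} x w S - costIdx A x w S)
  set C := costIdx {i ∈ X | f i ∉ U} x w S
    + 8 * (clusterCentroidCost X x w f U - centroidCost x w A)
  have hwA : ∀ i ∈ A, 0 ≤ w i := fun i hi => hw i (mem_filter.1 hi).1
  have hH : 0 ≤ H := add_nonneg zero_le_one (harmonic_cast_nonneg _)
  have hterm : ∀ a ∈ A, w a * distToCenters x S (x a) ^ 2 * expCostD2 X x w (insert a S) t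
      ≤ H * (w a * distToCenters x S (x a) ^ 2 * costIdx A x w (insert a S))
        + w a * distToCenters x S (x a) ^ 2 * (C * H + R) := by
    intro a ha
    have := hwA a ha
    calc w a * distToCenters x S (x a) ^ 2 * expCostD2 X x w (insert a S) t
        ≤ w a * distToCenters x S (x a) ^ 2
          * ((costIdx {i ∈ X | f i ∉ U} x w S + costIdx A x w (insert a S)
              + 8 * (clusterCentroidCost X x w f U - centroidCost x w A)) * H + R) := by
          gcongr
          exact (ih _ (insert_nonempty a S)).trans (d2SamplingBound_erase_insert_le hw hS hq ht a)
      _ = _ := by ring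
  calc ∑ a ∈ A, w a * distToCenters x S (x a) ^ 2 * expCostD2 X x w (insert a S) t
      ≤ ∑ a ∈ A, (H * (w a * distToCenters x S (x a) ^ 2 * costIdx A x w (insert a S))
        + w a * distToCenters x S (x a) ^ 2 * (C * H + R)) := sum_le_sum hterm
    _ = H * ∑ a ∈ A, w a * distToCenters x S (x a) ^ 2 * costIdx A x w (insert a S)
        + costIdx A x w S * (C * H + R) := by
      rw [sum_add_distrib, ← mul_sum, ← sum_mul, costIdx]
    _ ≤ H * (8 * centroidCost x w A * costIdx A x w S) + costIdx A x w S * (C * H + R) := by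
      gcongr
      exact sum_mul_costIdx_insert_le hwA hS
    _ = _ := by ring

lemma expCostD2_succ_le_d2SamplingBound (hw : ∀ i ∈ X, 0 ≤ w i) (hS : S.Nonempty)
    (ht : t + 1 ≤ #U)
    (ih : ∀ (U : Finset κ) (S : Finset ι), S.Nonempty → t ≤ #U →
      expCostD2 X x w S t ≤ d2SamplingBound X x w f U S t) :
    expCostD2 X x w S (t + 1) ≤ d2SamplingBound X x w f U S (t + 1) := by
  set Φc := costIdx {i ∈ X | f i ∉ U} x w S
  set Φu := costIdx {i ∈ X | f i ∈ U} x w S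
  set Φf : κ → ℝ := fun q => costIdx {i ∈ X | f i = q} x w S
  set K := Φc + 8 * clusterCentroidCost X x w f U
  set H : ℝ := (harmonic t : ℝ)
  set u : ℝ := (#U : ℝ)
  set c := (u - 1 - t) / (u - 1)
  set b := (u - 1 - t) / u
  have hZ : costIdx X x w S = Φu + Φc := (sum_filter_add_sum_filter_not X _ _).symm
  have hΦu : Φu = ∑ q ∈ U, Φf q := (sum_fiberwise_eq_sum_filter X U f _).symm
  have htu : (t : ℝ) + 1 ≤ u := by simp only [u]; exact_mod_cast ht
  have hΦc : 0 ≤ Φc := costIdx_nonneg (fun i hi => hw i (mem_filter.1 hi).1) S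
  have hK : Φc ≤ K :=
    le_add_of_nonneg_right (mul_nonneg (by norm_num) (clusterCentroidCost_nonneg hw))
  have hΦu0 : 0 ≤ Φu := costIdx_nonneg (fun i hi => hw i (mem_filter.1 hi).1) S
  rcases (costIdx_nonneg hw S).eq_or_lt with hZ0 | hZpos
  · rw [expCostD2, ← costIdx, ← hZ0]
    simpa using d2SamplingBound_nonneg hw ht
  have hunc : ∑ i ∈ X with f i ∈ U,
        w i * distToCenters x S (x i) ^ 2 * expCostD2 X x w (insert i S) t
      ≤ Φu * (K * (1 + H)) + c * (Φu ^ 2 - ∑ q ∈ U, Φf q ^ 2) := by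
    rw [← sum_fiberwise_eq_sum_filter X U f]
    have hq : ∀ q ∈ U, Φf q * (K * (1 + H) + c * (Φu - Φf q))
        = (K * (1 + H) + c * Φu) * Φf q - c * Φf q ^ 2 := fun _ _ => by ring
    calc _ ≤ ∑ q ∈ U, Φf q * (K * (1 + H) + c * (Φu - Φf q)) :=
          sum_le_sum fun q hq => sum_fiber_mul_expCostD2_le hw hS hq ht
            (ih _ · · (by rw [card_erase_of_mem hq]; omega))
      _ = _ := by
          rw [sum_congr rfl hq, sum_sub_distrib, ← mul_sum, ← mul_sum, ← hΦu]
          ring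
  have hc : c * (Φu ^ 2 - ∑ q ∈ U, Φf q ^ 2) ≤ b * Φu ^ 2 := by
    have hc0 : 0 ≤ c := div_nonneg (by linarith) (by linarith)
    calc c * (Φu ^ 2 - ∑ q ∈ U, Φf q ^ 2) ≤ c * ((u - 1) / u * Φu ^ 2) := by
          gcongr; rw [hΦu]; exact sq_sum_sub_sum_sq_le U Φf
      _ = b * Φu ^ 2 := by
          rcases eq_or_ne (u - 1) 0 with h1 | h1
          · have ht0 : (t : ℝ) = 0 := by linarith [Nat.cast_nonneg (α := ℝ) t]
            simp [c, b, h1, ht0]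
          · have hu : u ≠ 0 := by linarith
            simp only [c, b]
            field_simp
  have hcross : Φc * Φu * u⁻¹ ≤ (Φu + Φc) * K * ((t : ℝ) + 1)⁻¹ := by
    have hinv : u⁻¹ ≤ ((t : ℝ) + 1)⁻¹ := inv_anti₀ (by positivity) htu
    have hK0 : 0 ≤ K := hΦc.trans hK
    calc Φc * Φu * u⁻¹ ≤ Φu * K * ((t : ℝ) + 1)⁻¹ := by
          rw [mul_comm Φc]; gcongr
      _ ≤ (Φu + Φc) * K * ((t : ℝ) + 1)⁻¹ := by gcongr; linarith
  have hcov : ∑ i ∈ X with f i ∉ U,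
        w i * distToCenters x S (x i) ^ 2 * expCostD2 X x w (insert i S) t
      ≤ Φc * (K * (1 + H) + (b + u⁻¹) * Φu) := by
    rw [show b + u⁻¹ = (u - t) / u by simp only [b]; ring]
    exact sum_covered_mul_expCostD2_le hw hS (by omega) (ih U · · (by omega))
  refine le_of_mul_le_mul_left ?_ hZpos
  rw [mul_expCostD2_succ hZpos.ne', ← sum_filter_add_sum_filter_not X (f · ∈ U)]
  have hb' : (u - ↑(t + 1)) / u = b := by simp only [b]; push_cast; ring
  calc _ ≤ Φu * (K * (1 + H)) + c * (Φu ^ 2 - ∑ q ∈ U, Φf q ^ 2)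
        + Φc * (K * (1 + H) + (b + u⁻¹) * Φu) := add_le_add hunc hcov
    _ ≤ (Φu + Φc) * (K * (1 + H) + b * Φu) + Φc * Φu * u⁻¹ := by nlinarith [hc]
    _ ≤ (Φu + Φc) * (K * (1 + (H + ((t : ℝ) + 1)⁻¹)) + b * Φu) := by nlinarith [hcross]
    _ = _ := by
        rw [hZ, d2SamplingBound, harmonic_succ, hb']
        push_cast
        ring

lemma expCostD2_le_d2SamplingBound (hw : ∀ i ∈ X, 0 ≤ w i) (t : ℕ) :
    ∀ (U : Finset κ) (S : Finset ι), S.Nonempty → t ≤ #U →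
      expCostD2 X x w S t ≤ d2SamplingBound X x w f U S t := by
  induction t with
  | zero => exact fun U S _ _ => costIdx_le_d2SamplingBound_zero hw
  | succ t ih => exact fun U S hS ht => expCostD2_succ_le_d2SamplingBound hw hS ht ih

end Induction

lemma one_add_harmonic_pred_le (k : ℕ) : 1 + (harmonic (k - 1) : ℝ) ≤ Real.log k + 2 := by
  have hH := harmonic_le_one_add_log (k - 1)
  have hlog : Real.log (k - 1 : ℕ) ≤ Real.log k := by
    rcases Nat.eq_zero_or_pos (k - 1) with h | h
    · rw [h, Nat.cast_zero, Real.log_zero]; exact Real.log_natCast_nonneg k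
    · exact Real.log_le_log (by exact_mod_cast h) (by exact_mod_cast Nat.sub_le k 1)
  linarith

lemma expCostD2_of_fin_zero {ι : Type*} [DecidableEq ι] (X : Finset ι)
    (x : ι → EuclideanSpace ℝ (Fin 0)) (w : ι → ℝ) (S : Finset ι) (t : ℕ) :
    expCostD2 X x w S t = 0 := by
  cases t <;> simp [expCostD2, costIdx, distToCenters_of_fin_zero]

section KMeans
variable {d : ℕ} {ι : Type*} {X : Finset ι}
  {x : ι → EuclideanSpace ℝ (Fin d)} {w : ι → ℝ}

lemma kmeansCost_nonneg (hw : ∀ i ∈ X, 0 ≤ w i) (P : Finset (EuclideanSpace ℝ (Fin d))) :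
    0 ≤ kmeansCost X x w P :=
  sum_nonneg fun i hi => mul_nonneg (hw i hi) (sq_nonneg _)

lemma clusterCentroidCost_le_kmeansCost (hw : ∀ i ∈ X, 0 ≤ w i)
    {P : Finset (EuclideanSpace ℝ (Fin d))} (hP : P.Nonempty)
    {f : ι → EuclideanSpace ℝ (Fin d)} (hf : ∀ i, f i ∈ P ∧ P.inf' hP (‖x i - ·‖) = ‖x i - f i‖) :
    clusterCentroidCost X x w f P ≤ kmeansCost X x w P := by
  have hcost : kmeansCost X x w P = ∑ i ∈ X, w i * ‖x i - f i‖ ^ 2 :=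
    sum_congr rfl fun i _ => by rw [dif_pos hP, (hf i).2]
  rw [hcost, ← sum_fiberwise_of_maps_to fun i _ => (hf i).1]
  refine sum_le_sum fun q _ => ?_
  calc centroidCost x w {i ∈ X | f i = q} ≤ ∑ i ∈ X with f i = q, w i * ‖x i - q‖ ^ 2 :=
        centroidCost_le (fun i hi => hw i (mem_filter.1 hi).1) q
    _ = ∑ i ∈ X with f i = q, w i * ‖x i - f i‖ ^ 2 :=
        sum_congr rfl fun i hi => by rw [(mem_filter.1 hi).2]

/-- Averaging over the first center, drawn with probability `∝ w`, turns the cost of its own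
cluster into twice the centroid cost (Lemma 3.1 of Arthur–Vassilvitskii). -/
lemma sum_mul_firstCenterCost_le [DecidableEq ι] {κ : Type*} [DecidableEq κ] {f : ι → κ}
    {P : Finset κ} (hw : ∀ i ∈ X, 0 ≤ w i) (hf : ∀ i ∈ X, f i ∈ P) :
    ∑ i ∈ X, w i * (costIdx {j ∈ X | f j = f i} x w {i}
        + 8 * (clusterCentroidCost X x w f P - centroidCost x w {j ∈ X | f j = f i}))
      ≤ 8 * clusterCentroidCost X x w f P * ∑ i ∈ X, w i := by
  rw [← sum_fiberwise_of_maps_to hf, ← sum_fiberwise_of_maps_to hf, mul_sum]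
  refine sum_le_sum fun q _ => ?_
  set A := {i ∈ X | f i = q}
  have hwA : ∀ i ∈ A, 0 ≤ w i := fun i hi => hw i (mem_filter.1 hi).1
  have hφ := centroidCost_nonneg hwA (x := x)
  have hWA := sum_nonneg hwA
  calc ∑ i ∈ A, w i * (costIdx {j ∈ X | f j = f i} x w {i}
          + 8 * (clusterCentroidCost X x w f P - centroidCost x w {j ∈ X | f j = f i}))
      = ∑ a ∈ A, w a * ∑ j ∈ A, w j * ‖x j - x a‖ ^ 2
        + 8 * (clusterCentroidCost X x w f P - centroidCost x w A) * ∑ i ∈ A, w i := by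
        rw [mul_sum, ← sum_add_distrib]
        refine sum_congr rfl fun i hi => ?_
        rw [(mem_filter.1 hi).2, costIdx_singleton]
        ring
    _ = 2 * (∑ i ∈ A, w i) * centroidCost x w A
        + 8 * (clusterCentroidCost X x w f P - centroidCost x w A) * ∑ i ∈ A, w i := by
        rw [sum_mul_sum_mul_norm_sub_sq hwA]
    _ ≤ 8 * clusterCentroidCost X x w f P * ∑ i ∈ A, w i := by nlinarith

theorem d2Sampling_expCost_le_kmeansCost [DecidableEq ι] (hw : ∀ i ∈ X, 0 ≤ w i) {k : ℕ}
    (hk : 1 ≤ k) {P : Finset (EuclideanSpace ℝ (Fin d))} (hPk : #P = k) :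
    ∑ i ∈ X, (w i / ∑ j ∈ X, w j) * expCostD2 X x w {i} (k - 1)
      ≤ 8 * (Real.log k + 2) * kmeansCost X x w P := by
  have hP : P.Nonempty := card_pos.1 (hPk ▸ hk)
  choose f hf using fun i => exists_mem_eq_inf' hP (‖x i - ·‖)
  set W := ∑ j ∈ X, w j
  set OPT := clusterCentroidCost X x w f P
  set H : ℝ := 1 + harmonic (k - 1)
  have hH : 0 ≤ H := add_nonneg zero_le_one (harmonic_cast_nonneg _)
  have hfirst : ∀ i ∈ X, expCostD2 X x w {i} (k - 1)
      ≤ (costIdx {j ∈ X | f j = f i} x w {i}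
          + 8 * (OPT - centroidCost x w {j ∈ X | f j = f i})) * H := by
    intro i _
    have hcard : #(P.erase (f i)) = k - 1 := by rw [card_erase_of_mem (hf i).1, hPk]
    have hnone : {j ∈ X | f j ∉ P} = ∅ := filter_false_of_mem fun j _ => not_not.2 (hf j).1
    have := expCostD2_le_d2SamplingBound hw (x := x) (f := f) (k - 1) (P.erase (f i)) {i}
      (singleton_nonempty i) hcard.ge
    rwa [d2SamplingBound, hcard, sub_self, zero_div, zero_mul, add_zero, costIdx,
      sum_filter_not_mem_erase (hf i).1, hnone, sum_empty, add_zero, ← costIdx,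
      clusterCentroidCost_erase (hf i).1] at this
  calc ∑ i ∈ X, (w i / W) * expCostD2 X x w {i} (k - 1)
      ≤ ∑ i ∈ X, (w i / W) * ((costIdx {j ∈ X | f j = f i} x w {i}
          + 8 * (OPT - centroidCost x w {j ∈ X | f j = f i})) * H) :=
        sum_le_sum fun i hi => mul_le_mul_of_nonneg_left (hfirst i hi)
          (div_nonneg (hw i hi) (sum_nonneg hw))
    _ = H / W * ∑ i ∈ X, w i * (costIdx {j ∈ X | f j = f i} x w {i}
          + 8 * (OPT - centroidCost x w {j ∈ X | f j = f i})) := by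
        rw [mul_sum]; exact sum_congr rfl fun i _ => by ring
    _ ≤ H / W * (8 * OPT * W) :=
        mul_le_mul_of_nonneg_left (sum_mul_firstCenterCost_le hw fun i _ => (hf i).1)
          (div_nonneg hH (sum_nonneg hw))
    _ = 8 * OPT * H * (W / W) := by ring
    _ ≤ 8 * OPT * H := by
        have := clusterCentroidCost_nonneg hw (x := x) (f := f) (U := P)
        exact mul_le_of_le_one_right (by positivity) (div_self_le_one W)
    _ ≤ 8 * (Real.log k + 2) * kmeansCost X x w P := by
        have := clusterCentroidCost_nonneg hw (x := x) (f := f) (U := P)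
        have := clusterCentroidCost_le_kmeansCost hw hP hf
        have := one_add_harmonic_pred_le k
        have := Real.log_natCast_nonneg k
        nlinarith

end KMeans

theorem weighted_D2_sampling_guarantee_general {d : ℕ} {ι : Type*} [DecidableEq ι]
    (X : Finset ι) (x : ι → EuclideanSpace ℝ (Fin d)) (w : ι → ℝ)
    (hw : ∀ i ∈ X, 0 ≤ w i)
    (k : ℕ) (hk : 1 ≤ k)
    (ΦOPT : ℝ)
    (hOPT : ΦOPT = sInf {r : ℝ | ∃ P : Finset (EuclideanSpace ℝ (Fin d)),
        P.card = k ∧ r = kmeansCost X x w P}) :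
    ∑ i ∈ X, (w i / ∑ j ∈ X, w j) * expCostD2 X x w {i} (k - 1)
      ≤ 8 * (Real.log k + 2) * ΦOPT := by
  have hc : 0 < 8 * (Real.log k + 2) := by have := Real.log_natCast_nonneg k; positivity
  rcases eq_or_ne d 0 with rfl | hd
  -- In dimension 0 there is no `k`-point set for `k ≥ 2`, so `ΦOPT = sInf ∅ = 0`; but then
  -- every cost vanishes as well.
  · have hOPT0 : 0 ≤ ΦOPT :=
      hOPT ▸ Real.sInf_nonneg fun _ ⟨P, _, hr⟩ => hr ▸ kmeansCost_nonneg hw P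
    simp only [expCostD2_of_fin_zero, mul_zero, sum_const_zero]
    positivity
  · have : NeZero d := ⟨hd⟩
    obtain ⟨P₀, hP₀⟩ := Infinite.exists_subset_card_eq (EuclideanSpace ℝ (Fin d)) k
    rw [hOPT, ← div_le_iff₀' hc]
    refine le_csInf ⟨_, P₀, hP₀, rfl⟩ ?_
    rintro _ ⟨P, hPk, rfl⟩
    rw [div_le_iff₀' hc]
    exact d2Sampling_expCost_le_kmeansCost hw hk hPk

/-- Theorem 3: weighted-D² sampling (first center chosen with probability ∝ wᵢ,
subsequent centers with probability ∝ wᵢ·D(xᵢ)²) is `8(ln k + 2)`-competitive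
in expectation for the weighted k-means problem. -/
theorem weighted_D2_sampling_guarantee {d : ℕ} {ι : Type*} [DecidableEq ι]
    (X : Finset ι) (x : ι → EuclideanSpace ℝ (Fin d)) (w : ι → ℝ)
    (hw : ∀ i ∈ X, 0 ≤ w i) (hW : 0 < ∑ i ∈ X, w i)
    (k : ℕ) (hk : 1 ≤ k)
    (ΦOPT : ℝ)
    (hOPT : ΦOPT = sInf {r : ℝ | ∃ P : Finset (EuclideanSpace ℝ (Fin d)),
        P.card = k ∧ r = kmeansCost X x w P}) :
    ∑ i ∈ X, (w i / ∑ j ∈ X, w j) * expCostD2 X x w {i} (k - 1)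
      ≤ 8 * (Real.log k + 2) * ΦOPT :=
  weighted_D2_sampling_guarantee_general X x w hw k hk ΦOPT hOPT
end
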